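/- Let p be a prime, r a prime dividing p-1, a not an r-th power mod p, θ a root of x^r - a, n with a^n = a mod p, and A a primitive r-th root of unity in 𝔽_p with A^n = A. If 1 + θ ∈ G_n, then |G_n| ≥ 2^r. -/

import Mathlib

/-!
Write `θ` for the root of `X ^ r - a` and `σ_n` for the algebra endomorphism `θ ↦ θ ^ n`, so that
`G_n` consists of the nonzero elements of the submonoid `{u | σ_n u = u ^ n}`. The automorphisms
`θ ↦ A ^ i θ` commute with `σ_n` because `A ^ n = A`, so they carry `1 + θ` to elements
`1 + A ^ i θ` of this submonoid, and hence all products `∏_{i ∈ S} (1 + A ^ i θ)` lie in it. For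
`S ⊊ {0, …, r - 1}` these are classes of polynomials of degree `< r`, so they are nonzero, and
pairwise distinct because the polynomials are: `S` is the set of `i` for which `-A ^ (-i)` is a
root. Together with `θ`, whose polynomial `X` has constant term `0` instead of `1`, this gives
`2 ^ r` elements of `G_n`.
-/

open Polynomial

/-- The set `G_n = { f(θ) ∈ 𝔽_p(θ)^* : f(θ^n) = f(θ)^n }` inside
`𝔽_p(θ) = 𝔽_p[x]/(x^r - a)`. -/
def Gset (p r : ℕ) (a : ZMod p) (m : ℕ) : Set (AdjoinRoot (X ^ r - C a)) :=
  {u | u ≠ 0 ∧ ∀ f : Polynomial (ZMod p),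
    Polynomial.aeval (AdjoinRoot.root (X ^ r - C a)) f = u →
    Polynomial.aeval ((AdjoinRoot.root (X ^ r - C a)) ^ m) f = u ^ m}

open AdjoinRoot

theorem AdjoinRoot.mk_injOn_natDegree_lt {R : Type*} [CommRing R] [Nontrivial R] {g : R[X]}
    (hg : g.Monic) : Set.InjOn (mk g) {f | f.natDegree < g.natDegree} := by
  intro f hf f' hf' h
  have hmod := congrArg (modByMonicHom hg) h
  rwa [modByMonicHom_mk, modByMonicHom_mk, (modByMonic_eq_self_iff hg).2 (degree_lt_degree hf),
    (modByMonic_eq_self_iff hg).2 (degree_lt_degree hf')] at hmod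

section SubsetProducts

variable {K ι : Type*} [Field K] {c : ι → K}

theorem coeff_zero_prod_one_add_C_mul_X (S : Finset ι) :
    (∏ i ∈ S, (1 + C (c i) * X)).coeff 0 = 1 := by
  simp [coeff_zero_eq_eval_zero, eval_prod]

theorem natDegree_prod_one_add_C_mul_X (hc0 : ∀ i, c i ≠ 0) (S : Finset ι) :
    (∏ i ∈ S, (1 + C (c i) * X)).natDegree = S.card := by
  have hdeg : ∀ i, (1 + C (c i) * X).natDegree = 1 := fun i => by
    rw [add_comm, ← C_1, natDegree_linear (hc0 i)]
  rw [natDegree_prod _ _ fun i _ => ne_zero_of_natDegree_gt (hdeg i ▸ Nat.zero_lt_one)]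
  simp [hdeg]

theorem eval_prod_one_add_C_mul_X_eq_zero_iff (hc : Function.Injective c) {j : ι} (hj : c j ≠ 0)
    (S : Finset ι) : (∏ i ∈ S, (1 + C (c i) * X)).eval (-(c j)⁻¹) = 0 ↔ j ∈ S := by
  simp only [eval_prod, Finset.prod_eq_zero_iff, eval_add, eval_one, eval_mul, eval_C, eval_X]
  have hfactor : ∀ i, 1 + c i * -(c j)⁻¹ = 0 ↔ i = j := fun i => by
    rw [mul_neg, ← sub_eq_add_neg, sub_eq_zero, eq_comm, ← div_eq_mul_inv, div_eq_one_iff_eq hj,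
      hc.eq_iff]
  simp only [hfactor, exists_eq_right]

theorem prod_one_add_C_mul_X_injective (hc : Function.Injective c) (hc0 : ∀ i, c i ≠ 0) :
    Function.Injective fun S : Finset ι => ∏ i ∈ S, (1 + C (c i) * X) := by
  intro S T hST
  ext j
  rw [← eval_prod_one_add_C_mul_X_eq_zero_iff hc (hc0 j),
    ← eval_prod_one_add_C_mul_X_eq_zero_iff hc (hc0 j)]
  exact (congrArg (fun q : K[X] => q.eval (-(c j)⁻¹) = 0) hST).to_iff

variable [DecidableEq K] [Fintype ι] [DecidableEq ι]

noncomputable def properSubsetProds (c : ι → K) : Finset K[X] :=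
  (Finset.univ.erase Finset.univ).image fun S : Finset ι => ∏ i ∈ S, (1 + C (c i) * X)

theorem card_properSubsetProds (hc : Function.Injective c) (hc0 : ∀ i, c i ≠ 0) :
    (properSubsetProds c).card = 2 ^ Fintype.card ι - 1 := by
  rw [properSubsetProds, Finset.card_image_of_injective _ (prod_one_add_C_mul_X_injective hc hc0),
    Finset.card_erase_of_mem (Finset.mem_univ _), Finset.card_univ, Fintype.card_finset]

theorem X_notMem_properSubsetProds : X ∉ properSubsetProds c := by
  simp only [properSubsetProds, Finset.mem_image, not_exists, not_and]
  intro S _ hS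
  simpa [hS] using coeff_zero_prod_one_add_C_mul_X (c := c) S

theorem ne_zero_of_mem_properSubsetProds {q : K[X]} (hq : q ∈ properSubsetProds c) : q ≠ 0 := by
  obtain ⟨S, -, rfl⟩ := Finset.mem_image.1 hq
  intro h0
  simpa [h0] using coeff_zero_prod_one_add_C_mul_X (c := c) S

theorem natDegree_lt_of_mem_properSubsetProds (hc0 : ∀ i, c i ≠ 0) {q : K[X]}
    (hq : q ∈ properSubsetProds c) : q.natDegree < Fintype.card ι := by
  obtain ⟨S, hS, rfl⟩ := Finset.mem_image.1 hq
  rw [natDegree_prod_one_add_C_mul_X hc0, Finset.card_lt_iff_ne_univ]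
  exact Finset.ne_of_mem_erase hS

end SubsetProducts

section RootPowHom

variable {K : Type*} [Field K] {a : K} {n : ℕ}

/-- The map `σ_n : θ ↦ θ ^ n` of the paper. -/
noncomputable def rootPowHom (r : ℕ) (han : a ^ n = a) :
    AdjoinRoot (X ^ r - C a) →ₐ[K] AdjoinRoot (X ^ r - C a) :=
  liftAlgHom _ (Algebra.ofId _ _) (root _ ^ n) <| by
    change aeval _ _ = _
    rw [map_sub, map_pow, aeval_X, aeval_C, ← pow_mul, mul_comm, pow_mul, root_X_pow_sub_C_pow,
      ← map_pow, han, AdjoinRoot.algebraMap_eq, sub_self]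

variable (r : ℕ) (han : a ^ n = a)

theorem rootPowHom_root : rootPowHom r han (root _) = root _ ^ n :=
  liftAlgHom_root _ _ _ _

theorem rootPowHom_comm_autAdjoinRootXPowSubC (η : rootsOfUnity r K)
    (hη : ((η : Kˣ) : K) ^ n = (η : Kˣ)) (u : AdjoinRoot (X ^ r - C a)) :
    rootPowHom r han (autAdjoinRootXPowSubC r a η u) =
      autAdjoinRootXPowSubC r a η (rootPowHom r han u) := by
  suffices h : (rootPowHom r han).comp (autAdjoinRootXPowSubC r a η : _ →ₐ[K] _) =
      (autAdjoinRootXPowSubC r a η : _ →ₐ[K] _).comp (rootPowHom r han) from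
    DFunLike.congr_fun h u
  refine algHom_ext ?_
  simp only [AlgHom.comp_apply, AlgEquiv.coe_toAlgHom, autAdjoinRootXPowSubC_root,
    rootPowHom_root, map_pow, map_smul, _root_.smul_pow, hη]

theorem rootPowHom_mk_prod_one_add_C_mul_X [NeZero r] {ι : Type*} {ζ : ι → K}
    (hζr : ∀ i, ζ i ^ r = 1) (hζn : ∀ i, ζ i ^ n = ζ i)
    (h1 : rootPowHom r han (1 + root _) = (1 + root _) ^ n) (S : Finset ι) :
    rootPowHom r han (mk (X ^ r - C a) (∏ i ∈ S, (1 + C (ζ i) * X))) =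
      mk (X ^ r - C a) (∏ i ∈ S, (1 + C (ζ i) * X)) ^ n := by
  have hmem : ∀ i, mk (X ^ r - C a) (1 + C (ζ i) * X) ∈
      (rootPowHom r han : AdjoinRoot (X ^ r - C a) →* _).eqLocusM (powMonoidHom n) := by
    intro i
    have hσ : mk (X ^ r - C a) (1 + C (ζ i) * X) =
        autAdjoinRootXPowSubC r a (rootsOfUnity.mkOfPowEq _ (hζr i)) (1 + root _) := by
      simp [autAdjoinRootXPowSubC_root, Algebra.smul_def]
    change rootPowHom r han _ = _ ^ n
    rw [hσ, rootPowHom_comm_autAdjoinRootXPowSubC, h1, map_pow]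
    simpa [rootsOfUnity.coe_mkOfPowEq] using hζn i
  rw [map_prod]
  exact Submonoid.prod_mem _ fun i _ => hmem i

end RootPowHom

theorem mem_Gset_iff {p r n : ℕ} [Fact p.Prime] {a : ZMod p} (han : a ^ n = a)
    {u : AdjoinRoot (X ^ r - C a)} : u ∈ Gset p r a n ↔ u ≠ 0 ∧ rootPowHom r han u = u ^ n := by
  have aeval_root_pow : ∀ f : (ZMod p)[X],
      aeval (root (X ^ r - C a) ^ n) f = rootPowHom r han (aeval (root _) f) := fun f => by
    rw [← rootPowHom_root r han, aeval_algHom_apply]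
  obtain ⟨f, rfl⟩ := mk_surjective u
  refine and_congr_right fun _ => ⟨fun hG => ?_, fun hσ g hg => ?_⟩
  · rw [← hG f (aeval_eq f), aeval_root_pow, aeval_eq]
  · rw [aeval_root_pow, hg, hσ]

theorem card_le_natCard_Gset {p r n : ℕ} [Fact p.Prime] (hr : r ≠ 0) {a : ZMod p}
    (han : a ^ n = a) (Q : Finset (ZMod p)[X])
    (hQ : ∀ q ∈ Q, q ≠ 0 ∧ q.natDegree < r ∧ rootPowHom r han (mk _ q) = mk _ q ^ n) :
    Q.card ≤ Nat.card (Gset p r a n) := by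
  have hg := monic_X_pow_sub_C a hr
  have := hg.finite_adjoinRoot
  have : Finite (AdjoinRoot (X ^ r - C a)) := Module.finite_of_finite (ZMod p)
  rw [Nat.card_coe_set_eq, ← Set.ncard_coe_finset]
  refine Set.ncard_le_ncard_of_injOn (mk _) (fun q hq => ?_) ?_ (Set.toFinite _)
  · obtain ⟨h0, hdeg, hσ⟩ := hQ q hq
    exact (mem_Gset_iff han).2
      ⟨mk_ne_zero_of_natDegree_lt hg h0 (by rwa [natDegree_X_pow_sub_C]), hσ⟩
  · exact (mk_injOn_natDegree_lt hg).mono fun q hq => by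
      rw [Set.mem_ofPred_eq, natDegree_X_pow_sub_C]
      exact (hQ q hq).2.1

theorem card_Gn_ge_general (p r n : ℕ) [Fact p.Prime] (hr : r.Prime) (a : ZMod p)
    (han : a ^ n = a) (A : ZMod p) (hA : orderOf A = r) (hAn : A ^ n = A)
    (h : (1 + AdjoinRoot.root (X ^ r - C a)) ∈ Gset p r a n) :
    2 ^ r ≤ Nat.card ↥(Gset p r a n) := by
  have : NeZero r := ⟨hr.ne_zero⟩
  set c : Fin r → ZMod p := fun i => A ^ (i : ℕ)
  have hc : Function.Injective c := fun i j hij =>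
    Fin.ext (pow_injOn_Iio_orderOf (by simp [hA]) (by simp [hA]) hij)
  have hA1 : A ^ r = 1 := hA ▸ pow_orderOf_eq_one A
  have hcr : ∀ i, c i ^ r = 1 := fun i => by rw [pow_right_comm, hA1, one_pow]
  have hc0 : ∀ i, c i ≠ 0 := fun i h0 => by simpa [h0, hr.ne_zero] using hcr i
  have hcn : ∀ i, c i ^ n = c i := fun i => by rw [← pow_mul, mul_comm, pow_mul, hAn]
  have hcard : (insert X (properSubsetProds c)).card = 2 ^ r := by
    rw [Finset.card_insert_of_notMem X_notMem_properSubsetProds, card_properSubsetProds hc hc0,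
      Fintype.card_fin, Nat.sub_add_cancel Nat.one_le_two_pow]
  rw [← hcard]
  refine card_le_natCard_Gset hr.ne_zero han _ fun q hq => ?_
  rcases Finset.mem_insert.1 hq with rfl | hq
  · exact ⟨X_ne_zero, natDegree_X (R := ZMod p) ▸ hr.one_lt, by rw [mk_X, rootPowHom_root]⟩
  refine ⟨ne_zero_of_mem_properSubsetProds hq,
    Fintype.card_fin r ▸ natDegree_lt_of_mem_properSubsetProds hc0 hq, ?_⟩
  obtain ⟨S, -, rfl⟩ := Finset.mem_image.1 hq
  exact rootPowHom_mk_prod_one_add_C_mul_X r han hcr hcn ((mem_Gset_iff han).1 h).2 S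

theorem card_Gn_ge (p r n : ℕ) [Fact p.Prime] (hr : r.Prime)
    (hrp : r ∣ p - 1) (a : ZMod p) (ha : ¬ ∃ b : ZMod p, b ^ r = a)
    (han : a ^ n = a) (A : ZMod p) (hA : orderOf A = r) (hAn : A ^ n = A)
    (h : (1 + AdjoinRoot.root (X ^ r - C a)) ∈ Gset p r a n) :
    2 ^ r ≤ Nat.card ↥(Gset p r a n) :=
  card_Gn_ge_general p r n hr a han A hA hAn h
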